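/- For the implicit Euler discretization of the drift-diffusion equation, (D^{n+1} − D^n)/Δt + τ₀ A_h* A_h D^{n+1} = 0 with discrete mass zero against √ρ_∞, and assuming the discrete Poincaré inequality ‖u‖ ≤ C_d‖A_h u‖ for such u, the solution decays geometrically: ‖D^n − D_∞‖² ≤ ‖D^0 − D_∞‖² (1 + (2τ₀/C_d²)Δt)^{-n}. -/

import Mathlib

/-- Discrete centered operator `(A_h u)_j = √T₀[(u_{j+1} − u_{j−1})/(2Δx_j) − (E_j/(2T₀))u_j]`
on a periodic mesh indexed by `ZMod N`. -/
noncomputable def Ah {N : ℕ} (T₀ : ℝ) (Δx E u : ZMod N → ℝ) : ZMod N → ℝ :=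
  fun j => Real.sqrt T₀ * ((u (j + 1) - u (j - 1)) / (2 * Δx j) - E j / (2 * T₀) * u j)

/-- Discrete adjoint operator
`(A_h* u)_j = −√T₀[(u_{j+1} − u_{j−1})/(2Δx_j) + (E_j/(2T₀))u_j]`. -/
noncomputable def AhStar {N : ℕ} (T₀ : ℝ) (Δx E u : ZMod N → ℝ) : ZMod N → ℝ :=
  fun j => -(Real.sqrt T₀ * ((u (j + 1) - u (j - 1)) / (2 * Δx j) + E j / (2 * T₀) * u j))

lemma zmod_sum_shift {N : ℕ} [NeZero N] (F : ZMod N → ℝ) :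
    ∑ j : ZMod N, F j = ∑ j : ZMod N, F (j + 1) :=
  Fintype.sum_equiv (Equiv.subRight 1) _ _ (fun x => by simp)

lemma zmod_sum_shift' {N : ℕ} [NeZero N] (F : ZMod N → ℝ) :
    ∑ j : ZMod N, F j = ∑ j : ZMod N, F (j - 1) :=
  Fintype.sum_equiv (Equiv.addRight 1) _ _ (fun x => by simp)

lemma ah_adjoint {N : ℕ} [NeZero N] (T₀ : ℝ) (hT₀ : 0 < T₀)
    (Δx E : ZMod N → ℝ) (hΔx : ∀ j, 0 < Δx j) (u v : ZMod N → ℝ) :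
    ∑ j : ZMod N, Δx j * u j * AhStar T₀ Δx E v j
      = ∑ j : ZMod N, Δx j * Ah T₀ Δx E u j * v j := by
  set s := Real.sqrt T₀ with hs
  have e1 : ∀ j, Δx j * u j * AhStar T₀ Δx E v j
      = -(s/2 * (u j * v (j+1))) + s/2 * (u j * v (j-1))
        - (s * Δx j * E j/(2*T₀)) * (u j * v j) := by
    intro j
    have h1 := (hΔx j).ne'
    have h2 := hT₀.ne'
    simp only [AhStar]
    field_simp
    ring
  have e2 : ∀ j, Δx j * Ah T₀ Δx E u j * v j
      = s/2 * (u (j+1) * v j) - s/2 * (u (j-1) * v j)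
        - (s * Δx j * E j/(2*T₀)) * (u j * v j) := by
    intro j
    have h1 := (hΔx j).ne'
    have h2 := hT₀.ne'
    simp only [Ah]
    field_simp
    ring
  have hA : (∑ j : ZMod N, u j * v (j+1)) = ∑ j : ZMod N, u (j-1) * v j := by
    have h := zmod_sum_shift' (fun j => u j * v (j+1))
    simpa using h
  have hB : (∑ j : ZMod N, u j * v (j-1)) = ∑ j : ZMod N, u (j+1) * v j := by
    have h := zmod_sum_shift (fun j => u j * v (j-1))
    simpa using h
  calc ∑ j : ZMod N, Δx j * u j * AhStar T₀ Δx E v j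
      = ∑ j : ZMod N, (-(s/2 * (u j * v (j+1))) + s/2 * (u j * v (j-1))
          - (s * Δx j * E j/(2*T₀)) * (u j * v j)) :=
        Finset.sum_congr rfl (fun j _ => e1 j)
    _ = -(s/2 * ∑ j : ZMod N, u j * v (j+1)) + s/2 * (∑ j : ZMod N, u j * v (j-1))
          - ∑ j : ZMod N, (s * Δx j * E j/(2*T₀)) * (u j * v j) := by
        simp [Finset.sum_add_distrib, Finset.sum_sub_distrib, Finset.mul_sum]
    _ = -(s/2 * ∑ j : ZMod N, u (j-1) * v j) + s/2 * (∑ j : ZMod N, u (j+1) * v j)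
          - ∑ j : ZMod N, (s * Δx j * E j/(2*T₀)) * (u j * v j) := by rw [hA, hB]
    _ = ∑ j : ZMod N, (s/2 * (u (j+1) * v j) - s/2 * (u (j-1) * v j)
          - (s * Δx j * E j/(2*T₀)) * (u j * v j)) := by
        simp [Finset.sum_add_distrib, Finset.sum_sub_distrib, Finset.mul_sum]
        ring
    _ = ∑ j : ZMod N, Δx j * Ah T₀ Δx E u j * v j :=
        Finset.sum_congr rfl (fun j _ => (e2 j).symm)
/-- geometric decay for the implicit Euler discretization of the
drift–diffusion equation `(D^{n+1} − D^n)/Δt + τ₀ A_h* A_h D^{n+1} = 0`, with the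
well-prepared field (so that `A_h √ρ_∞ = 0` and `A_h, A_h*` are discrete adjoints),
discrete zero mass against `√ρ_∞`, and the discrete Poincaré inequality
`‖u‖ ≤ C_d ‖A_h u‖` on that subspace:
`‖D^n − D_∞‖² ≤ ‖D^0 − D_∞‖² (1 + (2τ₀/C_d²)Δt)^{-n}` where `D_∞ = √ρ_∞`. -/
theorem implicit_euler_drift_diffusion_decay
    {N : ℕ} [NeZero N]
    (T₀ : ℝ) (hT₀ : 0 < T₀)
    (Δx : ZMod N → ℝ) (hΔx : ∀ j, 0 < Δx j)
    (ρ : ZMod N → ℝ) (hρ : ∀ j, 0 < ρ j)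
    (E : ZMod N → ℝ)
    (hE : ∀ j, E j = 2 * T₀ / Real.sqrt (ρ j)
      * ((Real.sqrt (ρ (j + 1)) - Real.sqrt (ρ (j - 1))) / (2 * Δx j)))
    (τ₀ Δt Cd : ℝ) (hτ₀ : 0 < τ₀) (hΔt : 0 < Δt) (hCd : 0 < Cd)
    (hPoincare : ∀ u : ZMod N → ℝ,
      (∑ j : ZMod N, Δx j * u j * Real.sqrt (ρ j)) = 0 →
      Real.sqrt (∑ j : ZMod N, Δx j * u j ^ 2)
        ≤ Cd * Real.sqrt (∑ j : ZMod N, Δx j * Ah T₀ Δx E u j ^ 2))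
    (D : ℕ → ZMod N → ℝ)
    (hscheme : ∀ n j, (D (n + 1) j - D n j) / Δt
      + τ₀ * AhStar T₀ Δx E (Ah T₀ Δx E (D (n + 1))) j = 0)
    (hmass : ∀ n,
      ∑ j : ZMod N, Δx j * (D n j - Real.sqrt (ρ j)) * Real.sqrt (ρ j) = 0) :
    ∀ n, ∑ j : ZMod N, Δx j * (D n j - Real.sqrt (ρ j)) ^ 2
      ≤ (∑ j : ZMod N, Δx j * (D 0 j - Real.sqrt (ρ j)) ^ 2)
        * ((1 + 2 * τ₀ / Cd ^ 2 * Δt) ^ n)⁻¹ := by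
  have hρs : ∀ j, (0:ℝ) < Real.sqrt (ρ j) := fun j => Real.sqrt_pos.2 (hρ j)
  -- Ah applied to D n equals Ah applied to the error
  have hAhD : ∀ n, Ah T₀ Δx E (D n)
      = Ah T₀ Δx E (fun j => D n j - Real.sqrt (ρ j)) := by
    intro n; funext j
    have h1 := (hρs j).ne'
    have h2 := hT₀.ne'
    have h3 := (hΔx j).ne'
    simp only [Ah]
    rw [hE j]
    field_simp
    ring_nf
  have hr : (0:ℝ) < 1 + 2 * τ₀ / Cd ^ 2 * Δt := by positivity
  -- one-step energy estimate
  have step : ∀ n, (1 + 2 * τ₀ / Cd ^ 2 * Δt)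
        * (∑ j : ZMod N, Δx j * (D (n+1) j - Real.sqrt (ρ j)) ^ 2)
      ≤ ∑ j : ZMod N, Δx j * (D n j - Real.sqrt (ρ j)) ^ 2 := by
    intro n
    set u : ZMod N → ℝ := fun j => D (n+1) j - Real.sqrt (ρ j) with hu
    set v : ZMod N → ℝ := fun j => D n j - Real.sqrt (ρ j) with hv
    set w : ZMod N → ℝ := Ah T₀ Δx E u with hw
    have hsch : ∀ j, u j - v j = -(Δt * τ₀ * AhStar T₀ Δx E w j) := by
      intro j
      have h := hscheme n j
      rw [hAhD (n+1)] at h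
      have h' : (u j - v j) / Δt + τ₀ * AhStar T₀ Δx E w j = 0 := by
        simpa [hu, hv, hw] using h
      have := hΔt.ne'
      field_simp at h'
      linarith
    have key : (∑ j : ZMod N, Δx j * u j * (u j - v j))
        = -(Δt * τ₀) * ∑ j : ZMod N, Δx j * w j ^ 2 := by
      calc (∑ j : ZMod N, Δx j * u j * (u j - v j))
          = ∑ j : ZMod N, -(Δt * τ₀) * (Δx j * u j * AhStar T₀ Δx E w j) :=
            Finset.sum_congr rfl (fun j _ => by rw [hsch j]; ring)
        _ = -(Δt * τ₀) * ∑ j : ZMod N, Δx j * u j * AhStar T₀ Δx E w j := by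
            rw [Finset.mul_sum]
        _ = -(Δt * τ₀) * ∑ j : ZMod N, Δx j * Ah T₀ Δx E u j * w j := by
            rw [ah_adjoint T₀ hT₀ Δx E hΔx u w]
        _ = -(Δt * τ₀) * ∑ j : ZMod N, Δx j * w j ^ 2 := by
            congr 1
            exact Finset.sum_congr rfl (fun j _ => by rw [← hw]; ring)
    set S1 := ∑ j : ZMod N, Δx j * u j ^ 2 with hS1
    set S0 := ∑ j : ZMod N, Δx j * v j ^ 2 with hS0
    set P := ∑ j : ZMod N, Δx j * u j * v j with hP
    set Q := ∑ j : ZMod N, Δx j * w j ^ 2 with hQ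
    have expand : (∑ j : ZMod N, Δx j * u j * (u j - v j)) = S1 - P := by
      rw [hS1, hP, ← Finset.sum_sub_distrib]
      exact Finset.sum_congr rfl (fun j _ => by ring)
    have energy : S1 - P = -(Δt * τ₀) * Q := by rw [← expand, key]
    have cauchy : 0 ≤ S1 + S0 - 2 * P := by
      have h1 : S1 - 2 * P + S0 = ∑ j : ZMod N, Δx j * (u j - v j) ^ 2 := by
        rw [hS1, hS0, hP, Finset.mul_sum]
        rw [← Finset.sum_sub_distrib, ← Finset.sum_add_distrib]
        exact Finset.sum_congr rfl (fun j _ => by ring)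
      have h2 : 0 ≤ ∑ j : ZMod N, Δx j * (u j - v j) ^ 2 :=
        Finset.sum_nonneg fun j _ => mul_nonneg (hΔx j).le (sq_nonneg _)
      linarith
    have hS1nn : 0 ≤ S1 := Finset.sum_nonneg fun j _ => mul_nonneg (hΔx j).le (sq_nonneg _)
    have hQnn : 0 ≤ Q := Finset.sum_nonneg fun j _ => mul_nonneg (hΔx j).le (sq_nonneg _)
    have hpoin : S1 ≤ Cd ^ 2 * Q := by
      have hp := hPoincare u (by simpa [hu] using hmass (n+1))
      have hs1 := Real.sq_sqrt hS1nn
      have hs2 := Real.sq_sqrt hQnn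
      have hn1 := Real.sqrt_nonneg S1
      have hn2 := Real.sqrt_nonneg Q
      rw [← hw] at hp
      nlinarith [hp, mul_nonneg hCd.le hn2]
    have hCd2 : (0:ℝ) < Cd ^ 2 := by positivity
    have hfrac : 2 * τ₀ / Cd ^ 2 * Δt * S1 ≤ 2 * Δt * τ₀ * Q := by
      rw [div_mul_eq_mul_div, div_mul_eq_mul_div, div_le_iff₀ hCd2]
      nlinarith [mul_le_mul_of_nonneg_left hpoin (by positivity : (0:ℝ) ≤ 2 * τ₀ * Δt)]
    nlinarith [energy, cauchy, hfrac]
  -- induction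
  intro n
  induction n with
  | zero => simp
  | succ n ih =>
    have hpow : (0:ℝ) < (1 + 2 * τ₀ / Cd ^ 2 * Δt) ^ n := pow_pos hr n
    have h1 : (∑ j : ZMod N, Δx j * (D (n+1) j - Real.sqrt (ρ j)) ^ 2)
        ≤ (∑ j : ZMod N, Δx j * (D n j - Real.sqrt (ρ j)) ^ 2) / (1 + 2 * τ₀ / Cd ^ 2 * Δt) := by
      rw [le_div_iff₀ hr]
      nlinarith [step n]
    calc (∑ j : ZMod N, Δx j * (D (n+1) j - Real.sqrt (ρ j)) ^ 2)
        ≤ (∑ j : ZMod N, Δx j * (D n j - Real.sqrt (ρ j)) ^ 2)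
            / (1 + 2 * τ₀ / Cd ^ 2 * Δt) := h1
      _ ≤ ((∑ j : ZMod N, Δx j * (D 0 j - Real.sqrt (ρ j)) ^ 2)
            * ((1 + 2 * τ₀ / Cd ^ 2 * Δt) ^ n)⁻¹) / (1 + 2 * τ₀ / Cd ^ 2 * Δt) := by
          gcongr
      _ = (∑ j : ZMod N, Δx j * (D 0 j - Real.sqrt (ρ j)) ^ 2)
            * ((1 + 2 * τ₀ / Cd ^ 2 * Δt) ^ (n+1))⁻¹ := by
          rw [pow_succ (1 + 2 * τ₀ / Cd ^ 2 * Δt) n, mul_inv, div_eq_mul_inv, mul_assoc]
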